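/- The evaluation at 0, Str(F) := F(0), is a supertrace on the Weyl algebra realized as (S, ⋆): Str vanishes on the super-commutator, i.e. Str(F ⋆ G − (−1)^{fg} G ⋆ F) = 0 for all F homogeneous of degree f and G homogeneous of degree g (degrees taken mod 2 for the sign). -/

import Mathlib

open MvPolynomial

noncomputable section

variable {K : Type*} [Field K] [CharZero K] {n : ℕ}

/-- Variable index set for `S = K[p₁,q₁,…,pₙ,qₙ]`: `inl i` is `pᵢ`, `inr i` is `qᵢ`. -/
abbrev Idx (n : ℕ) := Sum (Fin n) (Fin n)

/-- The variable `pᵢ`. -/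
def pV (n : ℕ) (K : Type*) [Field K] (i : Fin n) : MvPolynomial (Idx n) K := X (Sum.inl i)

/-- The variable `qᵢ`. -/
def qV (n : ℕ) (K : Type*) [Field K] (i : Fin n) : MvPolynomial (Idx n) K := X (Sum.inr i)

/-- Left factor of one summand of `℘^k (F ⊗ G)`: for each `j : Fin k` we chose
`(i, true)` (the term `∂/∂pᵢ ⊗ ∂/∂qᵢ`) or `(i, false)` (the term `∂/∂qᵢ ⊗ ∂/∂pᵢ`). -/
def derivsL {k : ℕ} (v : Fin k → Fin n × Bool) (F : MvPolynomial (Idx n) K) :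
    MvPolynomial (Idx n) K :=
  (List.finRange k).foldl
    (fun F j => pderiv (if (v j).2 then Sum.inl (v j).1 else Sum.inr (v j).1) F) F

/-- Right factor of one summand of `℘^k (F ⊗ G)`. -/
def derivsR {k : ℕ} (v : Fin k → Fin n × Bool) (G : MvPolynomial (Idx n) K) :
    MvPolynomial (Idx n) K :=
  (List.finRange k).foldl
    (fun G j => pderiv (if (v j).2 then Sum.inr (v j).1 else Sum.inl (v j).1) G) G

/-- Moyal coefficient `C_k(F,G) = (1/(2^k k!)) (m ∘ ℘^k)(F ⊗ G)`, with
`℘(F ⊗ G) = Σᵢ (∂F/∂pᵢ ⊗ ∂G/∂qᵢ − ∂F/∂qᵢ ⊗ ∂G/∂pᵢ)` expanded multinomially. -/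
def moyalC (k : ℕ) (F G : MvPolynomial (Idx n) K) : MvPolynomial (Idx n) K :=
  ((2 ^ k * Nat.factorial k : ℕ) : K)⁻¹ •
    ∑ v : Fin k → Fin n × Bool,
      (∏ j : Fin k, if (v j).2 then (1 : K) else -1) • (derivsL v F * derivsR v G)

/-- The Moyal star product at `t = 1`: `F ⋆ G = Σ_{k ≥ 0} C_k(F,G)`; the sum is finite
since `C_k(F,G) = 0` as soon as `k` exceeds the total degree of `F`. -/
def mstar (F G : MvPolynomial (Idx n) K) : MvPolynomial (Idx n) K :=
  ∑ k ∈ Finset.range (F.totalDegree + 1), moyalC k F G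

/-- The Poisson bracket `{F,G} = Σᵢ (∂F/∂pᵢ ∂G/∂qᵢ − ∂F/∂qᵢ ∂G/∂pᵢ)`. -/
def poisson (F G : MvPolynomial (Idx n) K) : MvPolynomial (Idx n) K :=
  ∑ i : Fin n,
    (pderiv (Sum.inl i) F * pderiv (Sum.inr i) G -
      pderiv (Sum.inr i) F * pderiv (Sum.inl i) G)

/-- The supertrace `Str F = F(0)`, evaluation at the origin. -/
def Str (F : MvPolynomial (Idx n) K) : K := eval (fun _ => 0) F

set_option linter.unusedSectionVars false

lemma pderiv_hom {i : Idx n} {F : MvPolynomial (Idx n) K} {d : ℕ}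
    (h : F.IsHomogeneous d) : (pderiv i F).IsHomogeneous (d - 1) := by
  conv_lhs => rw [F.as_sum]
  rw [map_sum]
  apply IsHomogeneous.sum
  intro v hv
  rw [pderiv_monomial]
  by_cases hvi : v i = 0
  · rw [hvi, Nat.cast_zero, mul_zero, map_zero]; exact isHomogeneous_zero _ _ _
  · apply isHomogeneous_monomial
    have hcase : v.degree = d := by
      by_contra hne
      exact (mem_support_iff.mp hv) (h.coeff_eq_zero hne)
    have hle : Finsupp.single i 1 ≤ v := Finsupp.single_le_iff.mpr (Nat.one_le_iff_ne_zero.mpr hvi)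
    have hadd : (v - Finsupp.single i 1) + Finsupp.single i 1 = v := tsub_add_cancel_of_le hle
    have hsingle : (Finsupp.single i 1).degree = 1 := by
      simp [Finsupp.degree_apply, Finsupp.support_single_ne_zero i one_ne_zero]
    have hw : ((v - Finsupp.single i 1) + Finsupp.single i 1).degree =
        (v - Finsupp.single i 1).degree + (Finsupp.single i 1).degree := by
      simp only [Finsupp.degree_eq_weight_one]; exact map_add _ _ _
    rw [hadd, hsingle, hcase] at hw
    omega

lemma pderiv_hom_zero {i : Idx n} {F : MvPolynomial (Idx n) K}
    (h : F.IsHomogeneous 0) : pderiv i F = 0 := by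
  conv_lhs => rw [F.as_sum]
  rw [map_sum]
  apply Finset.sum_eq_zero
  intro v hv
  have hv0 : v = 0 := by
    rw [← Finsupp.degree_eq_zero_iff]
    by_contra hne
    exact (mem_support_iff.mp hv) (h.coeff_eq_zero hne)
  rw [pderiv_monomial, hv0]
  simp

lemma foldl_pderiv_zero {α : Type*} (σf : α → Idx n) (l : List α) :
    l.foldl (fun (F : MvPolynomial (Idx n) K) j => pderiv (σf j) F) 0 = 0 := by
  induction l with
  | nil => rfl
  | cons a l ih => simpa using ih

lemma foldl_pderiv_spec {α : Type*} (σf : α → Idx n) (l : List α) :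
    ∀ (F : MvPolynomial (Idx n) K) (d : ℕ), F.IsHomogeneous d →
      (l.foldl (fun F j => pderiv (σf j) F) F).IsHomogeneous (d - l.length) ∧
      (d < l.length → l.foldl (fun F j => pderiv (σf j) F) F = 0) := by
  induction l with
  | nil => intro F d h; exact ⟨by simpa using h, by simp⟩
  | cons a l ih =>
    intro F d h
    have h' : (pderiv (σf a) F).IsHomogeneous (d - 1) := pderiv_hom h
    obtain ⟨h1, h2⟩ := ih (pderiv (σf a) F) (d - 1) h'
    refine ⟨?_, ?_⟩
    · simpa [Nat.sub_sub, List.foldl_cons, Nat.add_comm] using h1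
    · intro hd
      simp only [List.length_cons] at hd
      rcases Nat.eq_zero_or_pos d with hd0 | hd0
      · subst hd0
        simp only [List.foldl_cons]
        rw [pderiv_hom_zero h]
        exact foldl_pderiv_zero σf l
      · have hlt : d - 1 < l.length := by omega
        exact h2 hlt

lemma str_hom {F : MvPolynomial (Idx n) K} {d : ℕ} (h : F.IsHomogeneous d) (hd : d ≠ 0) :
    eval (fun _ => (0 : K)) F = 0 := by
  have : (fun _ : Idx n => (0 : K)) = (0 : Idx n → K) := rfl
  rw [this, eval_zero]
  exact h.coeff_eq_zero (by simpa [map_zero] using hd.symm)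

lemma derivsL_spec {k : ℕ} (v : Fin k → Fin n × Bool) {F : MvPolynomial (Idx n) K} {f : ℕ}
    (hF : F.IsHomogeneous f) :
    (derivsL v F).IsHomogeneous (f - k) ∧ (f < k → derivsL v F = 0) := by
  have := foldl_pderiv_spec (n := n) (K := K)
    (fun j => if (v j).2 then Sum.inl (v j).1 else Sum.inr (v j).1) (List.finRange k) F f hF
  simpa [derivsL, List.length_finRange] using this

lemma derivsR_spec {k : ℕ} (v : Fin k → Fin n × Bool) {G : MvPolynomial (Idx n) K} {g : ℕ}
    (hG : G.IsHomogeneous g) :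
    (derivsR v G).IsHomogeneous (g - k) ∧ (g < k → derivsR v G = 0) := by
  have := foldl_pderiv_spec (n := n) (K := K)
    (fun j => if (v j).2 then Sum.inr (v j).1 else Sum.inl (v j).1) (List.finRange k) G g hG
  simpa [derivsR, List.length_finRange] using this

lemma derivsL_zero {k : ℕ} (v : Fin k → Fin n × Bool) :
    derivsL v (0 : MvPolynomial (Idx n) K) = 0 :=
  foldl_pderiv_zero _ _

lemma derivsR_zero {k : ℕ} (v : Fin k → Fin n × Bool) :
    derivsR v (0 : MvPolynomial (Idx n) K) = 0 :=
  foldl_pderiv_zero _ _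

lemma moyalC_zero_left (k : ℕ) (G : MvPolynomial (Idx n) K) : moyalC k 0 G = 0 := by
  simp [moyalC, derivsL_zero]

lemma moyalC_zero_right (k : ℕ) (F : MvPolynomial (Idx n) K) : moyalC k F 0 = 0 := by
  simp [moyalC, derivsR_zero]

lemma str_moyalC_ne {k f g : ℕ} {F G : MvPolynomial (Idx n) K}
    (hF : F.IsHomogeneous f) (hG : G.IsHomogeneous g) (h : k ≠ f ∨ k ≠ g) :
    Str (moyalC k F G) = 0 := by
  unfold Str moyalC
  rw [MvPolynomial.smul_eval, map_sum]
  rw [Finset.sum_eq_zero, mul_zero]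
  intro v _
  rw [MvPolynomial.smul_eval, map_mul]
  have hz : MvPolynomial.eval (fun _ => (0:K)) (derivsL v F) = 0 ∨
      MvPolynomial.eval (fun _ => (0:K)) (derivsR v G) = 0 := by
    rcases h with h | h
    · left
      rcases Nat.lt_or_ge f k with hlt | hge
      · rw [(derivsL_spec v hF).2 hlt]; simp
      · exact str_hom (derivsL_spec v hF).1 (by omega)
    · right
      rcases Nat.lt_or_ge g k with hlt | hge
      · rw [(derivsR_spec v hG).2 hlt]; simp
      · exact str_hom (derivsR_spec v hG).1 (by omega)
  rcases hz with hz | hz <;> rw [hz] <;> ring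

lemma derivsL_flip {k : ℕ} (v : Fin k → Fin n × Bool) (F : MvPolynomial (Idx n) K) :
    derivsL (fun j => ((v j).1, !(v j).2)) F = derivsR v F := by
  unfold derivsL derivsR
  congr 1
  funext F j
  rcases h : (v j).2 <;> simp [h]

lemma derivsR_flip {k : ℕ} (v : Fin k → Fin n × Bool) (F : MvPolynomial (Idx n) K) :
    derivsR (fun j => ((v j).1, !(v j).2)) F = derivsL v F := by
  unfold derivsL derivsR
  congr 1
  funext F j
  rcases h : (v j).2 <;> simp [h]

lemma sign_flip {k : ℕ} (v : Fin k → Fin n × Bool) :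
    (∏ j : Fin k, if ((fun j => ((v j).1, !(v j).2)) j).2 then (1 : K) else -1) =
      (-1) ^ k * ∏ j : Fin k, if (v j).2 then (1 : K) else -1 := by
  have h : ∀ j : Fin k, (if ((fun j => ((v j).1, !(v j).2)) j).2 then (1 : K) else -1) =
      (-1) * (if (v j).2 then (1 : K) else -1) := by
    intro j; rcases h : (v j).2 <;> simp [h]
  rw [Finset.prod_congr rfl (fun j _ => h j), Finset.prod_mul_distrib, Finset.prod_const,
    Finset.card_univ, Fintype.card_fin]

lemma moyalC_swap (k : ℕ) (F G : MvPolynomial (Idx n) K) :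
    moyalC k G F = ((-1 : K) ^ k) • moyalC k F G := by
  unfold moyalC
  rw [smul_comm]
  congr 1
  rw [Finset.smul_sum]
  have hinv : Function.Involutive
      (fun v : Fin k → Fin n × Bool => fun j => ((v j).1, !(v j).2)) := by
    intro v; funext j; simp
  apply Fintype.sum_bijective _ hinv.bijective
  intro v
  rw [derivsL_flip, derivsR_flip, sign_flip, mul_smul, smul_smul, ← pow_add]
  rw [show ((-1 : K)) ^ (k + k) = 1 from Even.neg_one_pow ⟨k, rfl⟩, one_smul,
    mul_comm (derivsL v G)]

lemma str_mstar (F G : MvPolynomial (Idx n) K) :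
    Str (mstar F G) = ∑ k ∈ Finset.range (F.totalDegree + 1), Str (moyalC k F G) := by
  unfold Str mstar
  rw [map_sum]


/-- `Str` vanishes on super-commutators:
`Str(F ⋆ G − (−1)^{fg} G ⋆ F) = 0` for `F ∈ S^f`, `G ∈ S^g`. -/
theorem stmt6 (F G : MvPolynomial (Idx n) K) (f g : ℕ)
    (hF : F.IsHomogeneous f) (hG : G.IsHomogeneous g) :
    Str (mstar F G - ((-1 : K) ^ (f * g)) • mstar G F) = 0 := by
  have hlin : Str (mstar F G - ((-1 : K) ^ (f * g)) • mstar G F) =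
      Str (mstar F G) - (-1 : K) ^ (f * g) * Str (mstar G F) := by
    unfold Str
    rw [map_sub, MvPolynomial.smul_eval]
  rw [hlin]
  by_cases hF0 : F = 0
  · subst hF0
    have h1 : mstar (0 : MvPolynomial (Idx n) K) G = 0 := by
      unfold mstar
      exact Finset.sum_eq_zero fun k _ => moyalC_zero_left k G
    have h2 : mstar G (0 : MvPolynomial (Idx n) K) = 0 := by
      unfold mstar
      exact Finset.sum_eq_zero fun k _ => moyalC_zero_right k G
    rw [h1, h2]
    simp [Str]
  by_cases hG0 : G = 0
  · subst hG0
    have h1 : mstar F (0 : MvPolynomial (Idx n) K) = 0 := by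
      unfold mstar
      exact Finset.sum_eq_zero fun k _ => moyalC_zero_right k F
    have h2 : mstar (0 : MvPolynomial (Idx n) K) F = 0 := by
      unfold mstar
      exact Finset.sum_eq_zero fun k _ => moyalC_zero_left k F
    rw [h1, h2]
    simp [Str]
  have hdF : F.totalDegree = f := hF.totalDegree hF0
  have hdG : G.totalDegree = g := hG.totalDegree hG0
  by_cases hfg : f = g
  · subst hfg
    have e1 : Str (mstar F G) = Str (moyalC f F G) := by
      rw [str_mstar, hdF]
      apply Finset.sum_eq_single_of_mem f (Finset.self_mem_range_succ f)
      intro k _ hk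
      exact str_moyalC_ne hF hG (Or.inl hk)
    have e2 : Str (mstar G F) = Str (moyalC f G F) := by
      rw [str_mstar, hdG]
      apply Finset.sum_eq_single_of_mem f (Finset.self_mem_range_succ f)
      intro k _ hk
      exact str_moyalC_ne hG hF (Or.inl hk)
    have e3 : Str (moyalC f G F) = (-1 : K) ^ f * Str (moyalC f F G) := by
      rw [moyalC_swap]
      unfold Str
      rw [MvPolynomial.smul_eval]
    rw [e1, e2, e3, ← mul_assoc, ← pow_add]
    have : ((-1 : K)) ^ (f * f + f) = 1 := by
      apply Even.neg_one_pow
      have : f * f + f = f * (f + 1) := by ring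
      rw [this]
      exact Nat.even_mul_succ_self f
    rw [this, one_mul, sub_self]
  · have e1 : Str (mstar F G) = 0 := by
      rw [str_mstar]
      apply Finset.sum_eq_zero
      intro k _
      by_cases hk : k = f
      · exact str_moyalC_ne hF hG (Or.inr (by omega))
      · exact str_moyalC_ne hF hG (Or.inl hk)
    have e2 : Str (mstar G F) = 0 := by
      rw [str_mstar]
      apply Finset.sum_eq_zero
      intro k _
      by_cases hk : k = g
      · exact str_moyalC_ne hG hF (Or.inr (by omega))
      · exact str_moyalC_ne hG hF (Or.inl hk)
    rw [e1, e2]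
    ring

end
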